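/- arXiv:math/0207268 — 6 statements merged into one kernel-verified Lean document; each statement's English description precedes it below -/
import Mathlib

section
/- Let R be any n²×n² matrix over K satisfying the Hecke condition (q·I − R)(q⁻¹·I + R) = 0 with q² ≠ 1, let A be a unital associative K-algebra, L an n×n matrix with entries in A, L₁ = L ⊗ I_n, and a = ħ·(q − q⁻¹)⁻¹. Then L satisfies the modified reflection equation R L₁ R L₁ − L₁ R L₁ R − ħ(R L₁ − L₁ R) = 0 if and only if the shifted matrix L' = L − a·I satisfies the (non-modified) reflection equation R L'₁ R L'₁ = L'₁ R L'₁ R, where L'₁ = L' ⊗ I_n. -/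
open Matrix Kronecker

/-- For any n²×n² Hecke symmetry R over K (with q² ≠ 1), an n×n matrix L over a
K-algebra A satisfies the modified reflection equation
`R L₁ R L₁ − L₁ R L₁ R − ħ(R L₁ − L₁ R) = 0` iff the shifted matrix `L' = L − a·I`
(with `a = ħ(q − q⁻¹)⁻¹`) satisfies the non-modified reflection equation
`R L'₁ R L'₁ = L'₁ R L'₁ R`.  Here `hb` stands for ħ. -/
theorem mRE_iff_RE_shift (K : Type*) [Field K] (q hb : K) (hq : q ≠ 0) (hq2 : q ^ 2 ≠ 1)
    (n : ℕ) (R : Matrix (Fin n × Fin n) (Fin n × Fin n) K)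
    (hHecke : (q • (1 : Matrix (Fin n × Fin n) (Fin n × Fin n) K) - R) *
      (q⁻¹ • (1 : Matrix (Fin n × Fin n) (Fin n × Fin n) K) + R) = 0)
    (A : Type*) [Ring A] [Algebra K A]
    (L : Matrix (Fin n) (Fin n) A)
    (a : K) (ha : a = hb * (q - q⁻¹)⁻¹)
    (RA : Matrix (Fin n × Fin n) (Fin n × Fin n) A)
    (hRA : RA = R.map (algebraMap K A))
    (L₁ L₁' : Matrix (Fin n × Fin n) (Fin n × Fin n) A)
    (hL₁ : L₁ = L ⊗ₖ (1 : Matrix (Fin n) (Fin n) A))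
    (hL₁' : L₁' = (L - a • (1 : Matrix (Fin n) (Fin n) A)) ⊗ₖ (1 : Matrix (Fin n) (Fin n) A)) :
    (RA * L₁ * RA * L₁ - L₁ * RA * L₁ * RA - hb • (RA * L₁ - L₁ * RA) = 0) ↔
    (RA * L₁' * RA * L₁' = L₁' * RA * L₁' * RA) := by
  -- q - q⁻¹ ≠ 0
  have hqq : q - q⁻¹ ≠ 0 := by
    intro h
    apply hq2
    rw [sq]
    nth_rewrite 2 [sub_eq_zero.mp h]
    exact mul_inv_cancel₀ hq
  -- ħ = a * (q - q⁻¹)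
  have hab : a * (q - q⁻¹) = hb := by
    rw [ha, mul_assoc, inv_mul_cancel₀ hqq, mul_one]
  -- R² = 1 + (q - q⁻¹) • R  over K
  have hR2K : R * R = 1 + (q - q⁻¹) • R := by
    have h0 := hHecke
    simp only [sub_mul, mul_add, Matrix.smul_mul, Matrix.mul_smul, one_mul, mul_one,
      smul_smul, mul_inv_cancel₀ hq, inv_mul_cancel₀ hq, one_smul] at h0
    rw [sub_smul]
    linear_combination (norm := module) -h0
  -- R² = 1 + (q - q⁻¹) • R over A
  have hR2 : RA * RA = 1 + (q - q⁻¹) • RA := by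
    subst hRA
    have h2 := congrArg (fun M => M.map (algebraMap K A)) hR2K
    simp only [_root_.Matrix.map_mul] at h2
    rw [h2]
    ext i j
    simp only [Matrix.map_apply, Matrix.add_apply, Matrix.smul_apply, Matrix.one_apply,
      smul_eq_mul, _root_.map_add, _root_.map_mul, _root_.map_one, map_zero, map_sub,
      apply_ite (algebraMap K A)]
    rw [Algebra.smul_def, _root_.map_sub]
  -- L₁' = L₁ - a • 1
  have hsub : L₁' = L₁ - a • 1 := by
    rw [hL₁', hL₁]
    ext ⟨i, j⟩ ⟨k, l⟩
    simp [Matrix.kroneckerMap_apply, Matrix.sub_apply, Matrix.smul_apply, Matrix.one_apply,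
      sub_mul, Prod.ext_iff, mul_ite, ite_and]
    split <;> split <;> simp_all
  -- key identity
  have key : RA * L₁' * RA * L₁' - L₁' * RA * L₁' * RA =
      RA * L₁ * RA * L₁ - L₁ * RA * L₁ * RA - hb • (RA * L₁ - L₁ * RA) := by
    rw [hsub]
    have e1 : RA * (L₁ - a • 1) * RA * (L₁ - a • 1) =
        RA * L₁ * RA * L₁ - a • (RA * L₁ * RA) - a • (RA * RA * L₁) + (a * a) • (RA * RA) := by
      simp only [mul_sub, sub_mul, Matrix.mul_smul, Matrix.smul_mul, mul_one, one_mul,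
        smul_smul, smul_sub]
      abel
    have e2 : (L₁ - a • 1) * RA * (L₁ - a • 1) * RA =
        L₁ * RA * L₁ * RA - a • (L₁ * RA * RA) - a • (RA * L₁ * RA) + (a * a) • (RA * RA) := by
      simp only [mul_sub, sub_mul, Matrix.mul_smul, Matrix.smul_mul, mul_one, one_mul,
        smul_smul, smul_sub]
      abel
    have e3 : RA * RA * L₁ = L₁ + (q - q⁻¹) • (RA * L₁) := by
      rw [hR2, add_mul, one_mul, Matrix.smul_mul]
    have e4 : L₁ * RA * RA = L₁ + (q - q⁻¹) • (L₁ * RA) := by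
      rw [mul_assoc, hR2, mul_add, mul_one, Matrix.mul_smul]
    rw [e1, e2, e3, e4, ← hab]
    module
  rw [← sub_eq_zero (a := RA * L₁' * RA * L₁'), key]
end

section
/- In any unital associative K-algebra A with elements a,b,c,d satisfying the modified reflection equation relations qab − q⁻¹ba = ħb; qca − q⁻¹ac = ħc; ad = da; q(bc − cb) = (λa − ħ)(d − a); q(cd − dc) = c(λa − ħ); q(db − bd) = (λa − ħ)b, the element l = q⁻¹a + q·d commutes with each of a, b, c, d (hence l = Tr_R L is central in the subalgebra generated by a,b,c,d). -/
/-- In any unital associative K-algebra with elements `a,b,c,d` satisfying the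
modified reflection equation relations, the element `l = q⁻¹a + q·d` commutes with each of
`a, b, c, d`.  Here `hb` stands for ħ and `q - q⁻¹` for λ. -/
theorem trace_element_central (K : Type*) [Field K] (q hb : K) (hq : q ≠ 0)
    (A : Type*) [Ring A] [Algebra K A] (a b c d : A)
    (h1 : q • (a * b) - q⁻¹ • (b * a) = hb • b)
    (h2 : q • (c * a) - q⁻¹ • (a * c) = hb • c)
    (h3 : a * d = d * a)
    (h4 : q • (b * c - c * b) = ((q - q⁻¹) • a - hb • (1 : A)) * (d - a))
    (h5 : q • (c * d - d * c) = c * ((q - q⁻¹) • a - hb • (1 : A)))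
    (h6 : q • (d * b - b * d) = ((q - q⁻¹) • a - hb • (1 : A)) * b)
    (l : A) (hl : l = q⁻¹ • a + q • d) :
    l * a = a * l ∧ l * b = b * l ∧ l * c = c * l ∧ l * d = d * l := by
  subst hl
  simp only [smul_sub, sub_mul, mul_sub, smul_mul_assoc, mul_smul_comm, one_mul, mul_one]
    at h5 h6
  refine ⟨?_, ?_, ?_, ?_⟩ <;>
    simp only [add_mul, mul_add, smul_mul_assoc, mul_smul_comm]
  · rw [h3]
  · linear_combination (norm := module) h1 + h6
  · linear_combination (norm := module) -h2 - h5
  · rw [h3]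
end

section
/- In any unital associative K-algebra A with elements g,b,c satisfying q²gb − bg = ħ(q+q⁻¹)b; gc − q²cg = −ħ(q+q⁻¹)c; (q²+1)(bc − cb) + (q²−1)g² = ħ(q+q⁻¹)g, the quadratic element σ = −[2]_q⁻¹·([2]_q⁻¹·g² + q⁻¹·bc + q·cb) commutes with each of g, b, c (hence σ is central in the subalgebra generated by g, b, c). -/
/-!
Since `q [2]_q = q² + 1`, clearing denominators gives `σ = -((q² + 1)²)⁻¹ • C` for the
inverse-free Casimir element `C = q² g² + (q² + 1) bc + q² (q² + 1) cb`, so it suffices that `C`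
is central. Write `μ = ħ [2]_q`. For `g` this holds term by term: the first two relations give
`q² (bc g) = q² (g bc)`, and likewise for `cb`. For `b` (and symmetrically `c`) the third relation
rewrites the commutator `[b, C]` as `b g² - q⁴ g² b + μ (bg + q² gb)`, which vanishes once `bg`
is reduced to `q² gb - μ b`.
-/

namespace SLhq

variable {K A : Type*} [Field K] [Ring A] [Algebra K A]

def casimir (q : K) (g b c : A) : A :=
  q ^ 2 • (g * g) + (q ^ 2 + 1) • (b * c) + (q ^ 2 * (q ^ 2 + 1)) • (c * b)

variable {q μ : K} {g b c : A}

theorem commute_g_mul_bc (hq : q ≠ 0) (hgb : q ^ 2 • (g * b) - b * g = μ • b)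
    (hgc : g * c - q ^ 2 • (c * g) = -(μ • c)) : Commute g (b * c) := by
  have hbg : b * g = q ^ 2 • (g * b) - μ • b := by linear_combination (norm := module) -hgb
  have hcg : q ^ 2 • (c * g) = g * c + μ • c := by linear_combination (norm := module) -hgc
  refine (smul_right_injective A (pow_ne_zero 2 hq) ?_).symm
  calc q ^ 2 • (b * c * g) = b * (q ^ 2 • (c * g)) := by rw [mul_smul_comm, mul_assoc]
    _ = (b * g) * c + μ • (b * c) := by rw [hcg, mul_add, mul_smul_comm, mul_assoc]
    _ = q ^ 2 • (g * (b * c)) := by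
      rw [hbg, sub_mul, smul_mul_assoc, smul_mul_assoc, mul_assoc, sub_add_cancel]

theorem commute_g_mul_cb (hq : q ≠ 0) (hgb : q ^ 2 • (g * b) - b * g = μ • b)
    (hgc : g * c - q ^ 2 • (c * g) = -(μ • c)) : Commute g (c * b) := by
  have hbg : b * g = q ^ 2 • (g * b) - μ • b := by linear_combination (norm := module) -hgb
  have hcg : q ^ 2 • (c * g) = g * c + μ • c := by linear_combination (norm := module) -hgc
  refine (smul_right_injective A (pow_ne_zero 2 hq) ?_).symm
  calc q ^ 2 • (c * b * g) = q ^ 2 • (q ^ 2 • (c * g) * b - μ • (c * b)) := by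
        rw [mul_assoc, hbg, mul_sub, mul_smul_comm, mul_smul_comm, smul_mul_assoc, mul_assoc]
    _ = q ^ 2 • (g * (c * b)) := by
      rw [hcg, add_mul, smul_mul_assoc, mul_assoc, add_sub_cancel_right]

theorem commute_g_casimir (hq : q ≠ 0) (hgb : q ^ 2 • (g * b) - b * g = μ • b)
    (hgc : g * c - q ^ 2 • (c * g) = -(μ • c)) : Commute g (casimir q g b c) :=
  (((Commute.refl g).mul_right (Commute.refl g)).smul_right _ |>.add_right
    ((commute_g_mul_bc hq hgb hgc).smul_right _)).add_right
    ((commute_g_mul_cb hq hgb hgc).smul_right _)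

theorem commute_b_casimir (hgb : q ^ 2 • (g * b) - b * g = μ • b)
    (hbc : (q ^ 2 + 1) • (b * c - c * b) + (q ^ 2 - 1) • (g * g) = μ • g) :
    Commute b (casimir q g b c) := by
  have hbg : b * g = q ^ 2 • (g * b) - μ • b := by linear_combination (norm := module) -hgb
  have hbgg : b * (g * g) = (q ^ 2 * q ^ 2) • (g * (g * b)) - (2 * q ^ 2 * μ) • (g * b)
      + (μ * μ) • b := by
    rw [← mul_assoc, hbg, sub_mul, smul_mul_assoc, smul_mul_assoc, mul_assoc, hbg]
    simp only [mul_sub, mul_smul_comm, smul_sub, smul_smul]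
    module
  have hleft := congrArg (b * ·) hbc
  have hright := congrArg (· * b) hbc
  rw [Commute, SemiconjBy, casimir]
  simp only [mul_add, add_mul, mul_sub, sub_mul, mul_smul_comm, smul_mul_assoc, mul_assoc]
    at hleft hright ⊢
  linear_combination (norm := module) hleft + q ^ 2 • hright + hbgg + μ • hbg

theorem commute_c_casimir (hgc : g * c - q ^ 2 • (c * g) = -(μ • c))
    (hbc : (q ^ 2 + 1) • (b * c - c * b) + (q ^ 2 - 1) • (g * g) = μ • g) :
    Commute c (casimir q g b c) := by
  have hgc' : g * c = q ^ 2 • (c * g) - μ • c := by linear_combination (norm := module) hgc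
  have hggc : g * (g * c) = (q ^ 2 * q ^ 2) • (c * (g * g)) - (2 * q ^ 2 * μ) • (c * g)
      + (μ * μ) • c := by
    rw [hgc', mul_sub, mul_smul_comm, mul_smul_comm, ← mul_assoc, hgc']
    simp only [sub_mul, smul_mul_assoc, smul_sub, smul_smul, mul_assoc]
    module
  have hleft := congrArg (c * ·) hbc
  have hright := congrArg (· * c) hbc
  rw [Commute, SemiconjBy, casimir]
  simp only [mul_add, add_mul, mul_sub, sub_mul, mul_smul_comm, smul_mul_assoc, mul_assoc]
    at hleft hright ⊢
  linear_combination (norm := module) -(q ^ 2 • hleft) - hright - hggc - μ • hgc'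

theorem sigma_eq_smul_casimir (hq : q ≠ 0) :
    -((q + q⁻¹)⁻¹ • ((q + q⁻¹)⁻¹ • (g * g) + q⁻¹ • (b * c) + q • (c * b)))
      = (-((q ^ 2 + 1) ^ 2)⁻¹) • casimir q g b c := by
  have h2q : (q + q⁻¹)⁻¹ = q * (q ^ 2 + 1)⁻¹ := by
    rw [show q + q⁻¹ = q⁻¹ * (q ^ 2 + 1) by field_simp, mul_inv, inv_inv]
  unfold casimir
  rw [h2q]
  simp only [smul_add, smul_smul]
  match_scalars <;> field_simp

end SLhq

theorem sigma_central_general (K : Type*) [Field K] (q hb : K) (hq : q ≠ 0)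
    (A : Type*) [Ring A] [Algebra K A] (g b c : A)
    (h1 : (q ^ 2) • (g * b) - b * g = (hb * (q + q⁻¹)) • b)
    (h2 : g * c - (q ^ 2) • (c * g) = -((hb * (q + q⁻¹)) • c))
    (h3 : (q ^ 2 + 1) • (b * c - c * b) + (q ^ 2 - 1) • (g * g) = (hb * (q + q⁻¹)) • g)
    (σ : A)
    (hσ : σ = -((q + q⁻¹)⁻¹ • ((q + q⁻¹)⁻¹ • (g * g) + q⁻¹ • (b * c) + q • (c * b)))) :
    σ * g = g * σ ∧ σ * b = b * σ ∧ σ * c = c * σ := by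
  subst hσ
  rw [SLhq.sigma_eq_smul_casimir hq]
  exact ⟨((SLhq.commute_g_casimir hq h1 h2).smul_right _).symm,
    ((SLhq.commute_b_casimir h1 h3).smul_right _).symm,
    ((SLhq.commute_c_casimir h2 h3).smul_right _).symm⟩

/-- In any unital associative K-algebra with elements `g,b,c` satisfying the
defining relations of SL_{ħ,q}, the quadratic element
`σ = −[2]_q⁻¹·([2]_q⁻¹·g² + q⁻¹·bc + q·cb)` commutes with each of `g, b, c`.
Here `hb` stands for ħ and `[2]_q = q + q⁻¹`. -/
theorem sigma_central (K : Type*) [Field K] (q hb : K) (hq : q ≠ 0)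
    (hq2 : q + q⁻¹ ≠ 0)
    (A : Type*) [Ring A] [Algebra K A] (g b c : A)
    (h1 : (q ^ 2) • (g * b) - b * g = (hb * (q + q⁻¹)) • b)
    (h2 : g * c - (q ^ 2) • (c * g) = -((hb * (q + q⁻¹)) • c))
    (h3 : (q ^ 2 + 1) • (b * c - c * b) + (q ^ 2 - 1) • (g * g) = (hb * (q + q⁻¹)) • g)
    (σ : A)
    (hσ : σ = -((q + q⁻¹)⁻¹ • ((q + q⁻¹)⁻¹ • (g * g) + q⁻¹ • (b * c) + q • (c * b)))) :
    σ * g = g * σ ∧ σ * b = b * σ ∧ σ * c = c * σ :=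
  sigma_central_general K q hb hq A g b c h1 h2 h3 σ hσ
end

section
/- Set κ = ħ(q²+1)/(q⁴+1) and define the 2×2 matrices over K: G = κ·diag(q, −q⁻¹), B = κ·[[0, q⁻¹],[0, 0]], C = κ·[[0, 0],[q, 0]]. Then these matrices satisfy the defining relations of SL_{ħ,q}: q²GB − BG = ħ(q+q⁻¹)B; GC − q²CG = −ħ(q+q⁻¹)C; (q²+1)(BC − CB) + (q²−1)G² = ħ(q+q⁻¹)G. Hence the assignment g ↦ G, b ↦ B, c ↦ C defines the two-dimensional vector representation π₁ of the algebra with relations q²gb − bg = ħ(q+q⁻¹)b; gc − q²cg = −ħ(q+q⁻¹)c; (q²+1)(bc − cb) + (q²−1)g² = ħ(q+q⁻¹)g. -/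
open Matrix

/-- With `κ = ħ(q²+1)/(q⁴+1)`, the 2×2 matrices `G = κ·diag(q, −q⁻¹)`,
`B = κ·[[0,q⁻¹],[0,0]]`, `C = κ·[[0,0],[q,0]]` satisfy the defining relations of SL_{ħ,q};
hence `g ↦ G, b ↦ B, c ↦ C` defines the two-dimensional vector representation π₁.
Here `hb` stands for ħ. -/
theorem vector_representation_pi1 (K : Type*) [Field K] (q hb : K) (hq : q ≠ 0)
    (hq4 : q ^ 4 + 1 ≠ 0)
    (κ : K) (hκ : κ = hb * (q ^ 2 + 1) / (q ^ 4 + 1))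
    (G B C : Matrix (Fin 2) (Fin 2) K)
    (hG : G = κ • !![q, 0; 0, -q⁻¹])
    (hB : B = κ • !![0, q⁻¹; 0, 0])
    (hC : C = κ • !![0, 0; q, 0]) :
    (q ^ 2) • (G * B) - B * G = (hb * (q + q⁻¹)) • B ∧
    G * C - (q ^ 2) • (C * G) = -((hb * (q + q⁻¹)) • C) ∧
    (q ^ 2 + 1) • (B * C - C * B) + (q ^ 2 - 1) • (G * G) = (hb * (q + q⁻¹)) • G := by
  subst hκ hG hB hC
  refine ⟨?_, ?_, ?_⟩ <;>
  · ext i j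
    fin_cases i <;> fin_cases j <;>
      simp [Matrix.mul_apply, Fin.sum_univ_succ, Matrix.smul_apply] <;>
      field_simp <;> ring
end

section
/- Let A be a unital associative K-algebra with elements g,b,c satisfying q²gb − bg = ħ(q+q⁻¹)b; gc − q²cg = −ħ(q+q⁻¹)c; (q²+1)(bc − cb) + (q²−1)g² = ħ(q+q⁻¹)g, and let L be the 2×2 matrix over A given by L = [[q[2]_q⁻¹·g, b],[c, −q⁻¹[2]_q⁻¹·g]]. Then L satisfies the Cayley–Hamilton identity L² − q⁻¹ħ·L + σ·I = 0, where σ = −[2]_q⁻¹·([2]_q⁻¹·g² + q⁻¹·bc + q·cb) and I is the 2×2 identity matrix over A. -/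
open Matrix

/-- For `g,b,c` satisfying the SL_{ħ,q} relations, the matrix
`L = [[q[2]_q⁻¹·g, b],[c, −q⁻¹[2]_q⁻¹·g]]` satisfies the Cayley–Hamilton identity
`L² − q⁻¹ħ·L + σ·I = 0`, where `σ = −[2]_q⁻¹·([2]_q⁻¹·g² + q⁻¹·bc + q·cb)`.
Here `hb` stands for ħ and `[2]_q = q + q⁻¹`. -/
theorem cayley_hamilton_L (K : Type*) [Field K] (q hb : K) (hq : q ≠ 0)
    (hq2 : q + q⁻¹ ≠ 0)
    (A : Type*) [Ring A] [Algebra K A] (g b c : A)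
    (h1 : (q ^ 2) • (g * b) - b * g = (hb * (q + q⁻¹)) • b)
    (h2 : g * c - (q ^ 2) • (c * g) = -((hb * (q + q⁻¹)) • c))
    (h3 : (q ^ 2 + 1) • (b * c - c * b) + (q ^ 2 - 1) • (g * g) = (hb * (q + q⁻¹)) • g)
    (σ : A)
    (hσ : σ = -((q + q⁻¹)⁻¹ • ((q + q⁻¹)⁻¹ • (g * g) + q⁻¹ • (b * c) + q • (c * b))))
    (L : Matrix (Fin 2) (Fin 2) A)
    (hL : L = !![(q * (q + q⁻¹)⁻¹) • g, b; c, -((q⁻¹ * (q + q⁻¹)⁻¹) • g)]) :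
    L * L - (q⁻¹ * hb) • L + σ • (1 : Matrix (Fin 2) (Fin 2) A) = 0 := by
  have hA : q ^ 2 + 1 ≠ 0 := by
    have h : q ^ 2 + 1 = q * (q + q⁻¹) := by field_simp; try ring
    rw [h]; exact mul_ne_zero hq hq2
  have e : (q + q⁻¹)⁻¹ = q / (q ^ 2 + 1) := by
    rw [eq_div_iff hA, inv_mul_eq_div, div_eq_iff hq2]; field_simp; try ring
  subst hσ hL
  simp only [e]
  ext i j
  simp only [Matrix.mul_apply, Fin.sum_univ_two, Matrix.sub_apply, Matrix.add_apply,
    Matrix.smul_apply, Matrix.one_apply, Matrix.zero_apply]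
  fin_cases i <;> fin_cases j <;>
    simp [Matrix.cons_val_zero, Matrix.cons_val_one]
  · linear_combination (norm := match_scalars) ((q / (q ^ 2 + 1)) ^ 2) • h3 <;>
      · field_simp; try ring
  · linear_combination (norm := match_scalars) (q⁻¹ * (q / (q ^ 2 + 1))) • h1 <;>
      · field_simp; try ring
  · linear_combination (norm := match_scalars) (-(q⁻¹ * (q / (q ^ 2 + 1)))) • h2 <;>
      · field_simp; try ring
  · linear_combination (norm := match_scalars) (-(q⁻¹ ^ 2 * (q / (q ^ 2 + 1)) ^ 2)) • h3 <;>
      · field_simp; try ring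
end

section
/- Let μ₀, μ₁, α, ħ, q ∈ K with q ≠ 0, μ₀ + μ₁ = q⁻¹ħ and μ₀·μ₁ = α. Then the cubic Cayley–Hamilton polynomial of the matrix L₍₂₎ factors completely: t³ − 2ħ([2]_q/q²)t² + ([2]_q²/q²)(q⁻²ħ² + α)t − ħ([2]_q³/q⁴)α = (t − μ₀(2))(t − μ₁(2))(t − μ₂(2)) in K[t], where μ₀(2) = q⁻¹[2]_q·μ₀, μ₁(2) = q⁻²(μ₀ + μ₁) + q⁻¹ħ, μ₂(2) = q⁻¹[2]_q·μ₁. This verifies the root formula q^{m−1}μ_i(m) = q^{−i}[m−i]_q μ₀ + q^{i−m}[i]_q μ₁ + [i]_q[m−i]_q ħ for m = 2. -/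
open Polynomial

private lemma cubic_factor_aux {K : Type*} [Field K] (a b c : K) :
    (X ^ 3 - C (a + b + c) * X ^ 2 + C (a*b + a*c + b*c) * X - C (a*b*c) : Polynomial K)
      = (X - C a) * (X - C b) * (X - C c) := by
  simp only [C_add, C_mul]; ring

/-- If `μ₀ + μ₁ = q⁻¹ħ` and `μ₀μ₁ = α`, then the cubic Cayley–Hamilton
polynomial of `L₍₂₎` factors completely in `K[t]` with roots
`μ₀(2) = q⁻¹[2]_q μ₀`, `μ₁(2) = q⁻²(μ₀+μ₁) + q⁻¹ħ`, `μ₂(2) = q⁻¹[2]_q μ₁`, verifying the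
root formula `q^{m−1}μ_i(m) = q^{−i}[m−i]_q μ₀ + q^{i−m}[i]_q μ₁ + [i]_q[m−i]_q ħ` at
`m = 2`.  Here `hb` stands for ħ and `[2]_q = q + q⁻¹`. -/
theorem cubic_CH_factorization (K : Type*) [Field K] (q hb α μ₀ μ₁ : K) (hq : q ≠ 0)
    (hsum : μ₀ + μ₁ = q⁻¹ * hb) (hprod : μ₀ * μ₁ = α) :
    (X ^ 3 - C (2 * hb * ((q + q⁻¹) / q ^ 2)) * X ^ 2
        + C ((q + q⁻¹) ^ 2 / q ^ 2 * ((q ^ 2)⁻¹ * hb ^ 2 + α)) * X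
        - C (hb * ((q + q⁻¹) ^ 3 / q ^ 4) * α) : Polynomial K)
      = (X - C (q⁻¹ * (q + q⁻¹) * μ₀)) *
        (X - C ((q ^ 2)⁻¹ * (μ₀ + μ₁) + q⁻¹ * hb)) *
        (X - C (q⁻¹ * (q + q⁻¹) * μ₁)) := by
  have hb' : hb = q * (μ₀ + μ₁) := by
    field_simp at hsum; linear_combination -hsum
  subst hb'
  subst hprod
  set a := q⁻¹ * (q + q⁻¹) * μ₀ with ha
  set b := (q ^ 2)⁻¹ * (μ₀ + μ₁) + q⁻¹ * (q * (μ₀ + μ₁)) with hbdef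
  set c := q⁻¹ * (q + q⁻¹) * μ₁ with hc
  have e1 : 2 * (q * (μ₀ + μ₁)) * ((q + q⁻¹) / q ^ 2) = a + b + c := by
    rw [ha, hbdef, hc]; field_simp
    try rw [eq_div_iff (by simp [hq])]
    ring
  have e2 : (q + q⁻¹) ^ 2 / q ^ 2 * ((q ^ 2)⁻¹ * (q * (μ₀ + μ₁)) ^ 2 + μ₀ * μ₁)
      = a * b + a * c + b * c := by
    rw [ha, hbdef, hc]; field_simp
    try rw [eq_div_iff (by simp [hq])]
    ring
  have e3 : q * (μ₀ + μ₁) * ((q + q⁻¹) ^ 3 / q ^ 4) * (μ₀ * μ₁) = a * b * c := by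
    rw [ha, hbdef, hc]; field_simp
    try rw [eq_div_iff (by simp [hq])]
    ring
  rw [e1, e2, e3]
  exact cubic_factor_aux a b c
end
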